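/- Let n ≥ 2 be an integer, λ = (λ_1 ≥ λ_2 ≥ … ≥ λ_n ≥ 0) a partition, and q, t ∈ ℂ with 0 < |q| < 1, t ≠ 0, and b_j q^k ≠ 1 for all j = 1,…,n−1 and all integers k ≥ 0. Define complex coefficients ρ_0, …, ρ_{λ_1−λ_n} by the polynomial identity in the variable w: ∏_{i=1}^{n−1} ∏_{j=0}^{λ_i−λ_{i+1}−1} (1 − b_i q^j w)/(1 − b_i q^j) = Σ_{k=0}^{λ_1−λ_n} ρ_k w^k. Then for every z ∈ ℂ with |z| < 1 such that (q z t^{−n};q)_∞ ≠ 0, one has ψ_λ(q,t;z) = z^{λ_n} Σ_{k=0}^{λ_1−λ_n} ρ_k · (z;q)_k / (q z t^{−n};q)_{λ_n−λ_1+k}, where the q-Pochhammer symbol with (possibly negative) integer index is (a;q)_m = (a;q)_∞/(a q^m;q)_∞. -/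

import Mathlib

/-!
STATEMENT 4: With `n = m + 2 ≥ 2`, a partition `λ`, `0 < |q| < 1`, `t ≠ 0`,
`bⱼ qᵏ ≠ 1` for all `j, k ≥ 0`, and coefficients `ρ_0, …, ρ_{λ₁-λₙ}` defined by the
polynomial identity
`∏_{i=1}^{n-1} ∏_{j=0}^{λ_i-λ_{i+1}-1} (1 - b_i q^j w)/(1 - b_i q^j) = Σ_k ρ_k w^k`,
one has, for `|z| < 1` with `(q z t^{-n};q)_∞ ≠ 0`,
`ψ_λ(q,t;z) = z^{λ_n} Σ_{k=0}^{λ₁-λₙ} ρ_k (z;q)_k / (q z t^{-n};q)_{λₙ-λ₁+k}`,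
where the Pochhammer with integer index is `(a;q)_m = (a;q)_∞/(a q^m;q)_∞`.
-/

/-- `(a;q)_∞ = ∏_{k=0}^∞ (1 - a q^k)`. -/
noncomputable def qPochInf (a q : ℂ) : ℂ := ∏' k : ℕ, (1 - a * q ^ k)

/-- `(a;q)_m = ∏_{k=0}^{m-1} (1 - a q^k)` for `m : ℕ`. -/
noncomputable def qPochN (a q : ℂ) (m : ℕ) : ℂ := ∏ k ∈ Finset.range m, (1 - a * q ^ k)

/-- `(a;q)_m = (a;q)_∞ / (a q^m;q)_∞` for `m : ℤ`. -/
noncomputable def qPochZ (a q : ℂ) (m : ℤ) : ℂ := qPochInf a q / qPochInf (a * q ^ m) q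

/-- The basic hypergeometric series `_{r+1}φ_r(a₁,…,a_{r+1}; b₁,…,b_r; q, z)`. -/
noncomputable def bhs {r : ℕ} (a : Fin (r + 1) → ℂ) (b : Fin r → ℂ) (q z : ℂ) : ℂ :=
  ∑' m : ℕ, (∏ i, qPochN (a i) q m) / (qPochN q q m * ∏ j, qPochN (b j) q m) * z ^ m

/-- `a_i = q^{1+λ_n-λ_i} t^{i-1-n}`, for `i = 1,…,n` (zero-based index, `n = m + 2`). -/
noncomputable def aPar (m : ℕ) (lam : Fin (m + 2) → ℕ) (q t : ℂ) (i : Fin (m + 2)) : ℂ :=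
  q ^ (1 + (lam (Fin.last (m + 1)) : ℤ) - (lam i : ℤ)) * t ^ ((i : ℤ) - (m + 2 : ℤ))

/-- `b_j = t a_j`, for `j = 1,…,n-1`. -/
noncomputable def bPar (m : ℕ) (lam : Fin (m + 2) → ℕ) (q t : ℂ) (j : Fin (m + 1)) : ℂ :=
  t * aPar m lam q t j.castSucc

/-- `φ_λ(q,t;z) = z^{λ_n} · _nφ_{n-1}(a; b; q, z)`. -/
noncomputable def phiLam (m : ℕ) (lam : Fin (m + 2) → ℕ) (q t z : ℂ) : ℂ :=
  z ^ (lam (Fin.last (m + 1))) * bhs (aPar m lam q t) (bPar m lam q t) q z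

/-- `ψ_λ(q,t;z) = (z;q)_∞ / (q z t^{-n};q)_∞ · φ_λ(q,t;z)`. -/
noncomputable def psiLam (m : ℕ) (lam : Fin (m + 2) → ℕ) (q t z : ℂ) : ℂ :=
  qPochInf z q / qPochInf (q * z * t ^ (-(m + 2 : ℤ))) q * phiLam m lam q t z


section Aux
open Filter Topology Finset

lemma one_sub_ne_zero_of_norm_lt_one {w : ℂ} (h : ‖w‖ < 1) : (1 : ℂ) - w ≠ 0 := by
  intro h0
  rw [sub_eq_zero] at h0
  rw [← h0] at h
  simp at h

lemma geom_sum_le_inv {r : ℝ} (h0 : 0 ≤ r) (h1 : r < 1) (M : ℕ) :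
    ∑ k ∈ range M, r ^ k ≤ (1 - r)⁻¹ := by
  have := Summable.sum_le_tsum (range M) (fun i _ => pow_nonneg h0 i)
    (summable_geometric_of_lt_one h0 h1)
  rwa [tsum_geometric_of_lt_one h0 h1] at this

lemma summable_log_qp (a q : ℂ) (hq : ‖q‖ < 1) :
    Summable (fun k : ℕ => Complex.log (1 - a * q ^ k)) := by
  have hq0 : (0:ℝ) ≤ ‖q‖ := norm_nonneg q
  obtain ⟨N, hN⟩ : ∃ N : ℕ, ‖a‖ * ‖q‖ ^ N ≤ 1 / 2 := by
    have h := (tendsto_pow_atTop_nhds_zero_of_lt_one hq0 hq).const_mul ‖a‖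
    rw [mul_zero] at h
    exact (h.eventually (eventually_le_nhds (by norm_num))).exists
  rw [← summable_nat_add_iff N]
  apply Summable.of_norm_bounded (g := fun k => 3 / 2 * (‖a‖ * ‖q‖ ^ N) * ‖q‖ ^ k)
    (((summable_geometric_of_lt_one hq0 hq).mul_left _))
  intro k
  have hnorm : ‖-(a * q ^ (k + N))‖ = ‖a‖ * ‖q‖ ^ N * ‖q‖ ^ k := by
    rw [norm_neg, norm_mul, norm_pow, pow_add]; ring
  have hsmall : ‖-(a * q ^ (k + N))‖ ≤ 1 / 2 := by
    rw [hnorm]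
    calc ‖a‖ * ‖q‖ ^ N * ‖q‖ ^ k ≤ (1/2) * 1 := by
          apply mul_le_mul hN (pow_le_one₀ hq0 hq.le) (by positivity) (by norm_num)
      _ = 1 / 2 := by norm_num
  have heq : (1 : ℂ) - a * q ^ (k + N) = 1 + -(a * q ^ (k + N)) := by ring
  rw [heq]
  calc ‖Complex.log (1 + -(a * q ^ (k + N)))‖ ≤ 3 / 2 * ‖-(a * q ^ (k + N))‖ :=
        Complex.norm_log_one_add_half_le_self hsmall
    _ = 3 / 2 * (‖a‖ * ‖q‖ ^ N) * ‖q‖ ^ k := by rw [hnorm]; ring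

lemma hasProd_qp (a q : ℂ) (hq : ‖q‖ < 1) :
    HasProd (fun k : ℕ => 1 - a * q ^ k) (qPochInf a q) := by
  by_cases hz : ∀ k : ℕ, (1 : ℂ) - a * q ^ k ≠ 0
  · have hs := summable_log_qp a q hq
    have hp := hs.hasSum.cexp
    have heq : (Complex.exp ∘ fun k : ℕ => Complex.log (1 - a * q ^ k)) =
        fun k : ℕ => 1 - a * q ^ k := funext fun b => Complex.exp_log (hz b)
    rw [heq] at hp
    rw [qPochInf, hp.tprod_eq]
    exact hp
  · push_neg at hz
    obtain ⟨k₀, hk₀⟩ := hz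
    have h0 : HasProd (fun k : ℕ => 1 - a * q ^ k) 0 := by
      rw [HasProd]
      apply tendsto_const_nhds.congr'
      filter_upwards [eventually_ge_atTop ({k₀} : Finset ℕ)] with s hs
      exact (Finset.prod_eq_zero (hs (Finset.mem_singleton_self k₀)) hk₀).symm
    rw [qPochInf, h0.tprod_eq]
    exact h0

lemma tendsto_qPochN (a q : ℂ) (hq : ‖q‖ < 1) :
    Tendsto (fun N => qPochN a q N) atTop (𝓝 (qPochInf a q)) :=
  (hasProd_qp a q hq).tendsto_prod_nat

lemma qPochInf_split (a q : ℂ) (hq : ‖q‖ < 1) (k : ℕ) :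
    qPochInf a q = qPochN a q k * qPochInf (a * q ^ k) q := by
  have hshift : (fun n : ℕ => (1:ℂ) - a * q ^ (n + k)) = fun n => 1 - a * q ^ k * q ^ n := by
    funext n; rw [pow_add]; ring
  have hmul : Multipliable (fun n : ℕ => (1:ℂ) - a * q ^ (n + k)) := by
    rw [hshift]; exact (hasProd_qp (a * q ^ k) q hq).multipliable
  have h := Multipliable.prod_mul_tprod_nat_mul' (M := ℂ) (f := fun n : ℕ => 1 - a * q ^ n) (k := k) hmul
  rw [qPochInf, ← h, qPochN]
  congr 1
  rw [qPochInf, ← hshift]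

lemma qPochN_norm_le (a q : ℂ) (hq : ‖q‖ < 1) (M : ℕ) :
    ‖qPochN a q M‖ ≤ Real.exp (‖a‖ * (1 - ‖q‖)⁻¹) := by
  rw [qPochN]
  calc ‖∏ k ∈ range M, (1 - a * q ^ k)‖ ≤ ∏ k ∈ range M, ‖1 - a * q ^ k‖ :=
        Finset.norm_prod_le _ _
    _ ≤ ∏ k ∈ range M, Real.exp (‖a‖ * ‖q‖ ^ k) := by
        apply Finset.prod_le_prod (fun i _ => norm_nonneg _)
        intro i _
        calc ‖1 - a * q ^ i‖ ≤ ‖(1:ℂ)‖ + ‖a * q ^ i‖ := norm_sub_le _ _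
          _ = ‖a‖ * ‖q‖ ^ i + 1 := by rw [norm_one, norm_mul, norm_pow]; ring
          _ ≤ Real.exp (‖a‖ * ‖q‖ ^ i) := Real.add_one_le_exp _
    _ = Real.exp (∑ k ∈ range M, ‖a‖ * ‖q‖ ^ k) := (Real.exp_sum _ _).symm
    _ ≤ Real.exp (‖a‖ * (1 - ‖q‖)⁻¹) := by
        apply Real.exp_le_exp.2
        rw [← mul_sum]
        exact mul_le_mul_of_nonneg_left
          (geom_sum_le_inv (norm_nonneg q) hq M) (norm_nonneg a)

lemma weierstrass_ineq (u : ℕ → ℝ) (h0 : ∀ k, 0 ≤ u k) (h1 : ∀ k, u k ≤ 1) (s : Finset ℕ) :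
    1 - ∑ k ∈ s, u k ≤ ∏ k ∈ s, (1 - u k) := by
  induction s using Finset.cons_induction with
  | empty => simp
  | cons a s ha ih =>
    rw [Finset.prod_cons, Finset.sum_cons]
    have hs : 0 ≤ ∑ k ∈ s, u k := Finset.sum_nonneg (fun i _ => h0 i)
    have hmul := mul_le_mul_of_nonneg_left ih (by linarith [h1 a] : (0:ℝ) ≤ 1 - u a)
    nlinarith [h0 a, h1 a]

lemma qPochN_q_norm_lower (q : ℂ) (hq : ‖q‖ < 1) :
    ∃ δ : ℝ, 0 < δ ∧ ∀ M, δ ≤ ‖qPochN q q M‖ := by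
  have hq0 : (0:ℝ) ≤ ‖q‖ := norm_nonneg q
  have h1q : (0:ℝ) < 1 - ‖q‖ := by linarith
  obtain ⟨N, hN⟩ : ∃ N : ℕ, ‖q‖ ^ N * (1 - ‖q‖)⁻¹ ≤ 1 / 2 := by
    have h := (tendsto_pow_atTop_nhds_zero_of_lt_one hq0 hq).mul_const (1 - ‖q‖)⁻¹
    rw [zero_mul] at h
    exact (h.eventually (eventually_le_nhds (by norm_num))).exists
  set v : ℕ → ℝ := fun k => 1 - ‖q‖ ^ (k + 1) with hv
  have hvpos : ∀ k, 0 < v k := by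
    intro k
    have h2 : ‖q‖ ^ (k+1) < 1 := by
      calc ‖q‖ ^ (k+1) ≤ ‖q‖ ^ 1 := pow_le_pow_of_le_one hq0 hq.le (by omega)
        _ < 1 := by simpa using hq
    simp only [hv]; linarith
  have hv1 : ∀ k, v k ≤ 1 := by
    intro k; simp only [hv]
    have : (0:ℝ) ≤ ‖q‖ ^ (k+1) := by positivity
    linarith
  have hstepa : ∀ M, ∏ k ∈ range M, v k ≤ ‖qPochN q q M‖ := by
    intro M
    rw [qPochN, norm_prod]
    apply Finset.prod_le_prod (fun i _ => (hvpos i).le)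
    intro i _
    calc v i = ‖(1:ℂ)‖ - ‖q * q ^ i‖ := by
          simp only [hv, norm_one, norm_mul, norm_pow]; ring
      _ ≤ ‖1 - q * q ^ i‖ := norm_sub_norm_le _ _
  refine ⟨(∏ k ∈ range N, v k) * (1 / 2), by
    have := Finset.prod_pos (fun i (_ : i ∈ range N) => hvpos i)
    positivity, fun M => ?_⟩
  refine le_trans ?_ (hstepa M)
  have hPNpos : 0 < ∏ k ∈ range N, v k := Finset.prod_pos (fun i _ => hvpos i)
  rcases le_or_gt M N with hMN | hMN
  · -- M ≤ N : prod over range M ≥ prod over range N ≥ δ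
    have hsplit : (∏ k ∈ range M, v k) * ∏ k ∈ Ico M N, v k = ∏ k ∈ range N, v k :=
      prod_range_mul_prod_Ico v hMN
    have hIco1 : ∏ k ∈ Ico M N, v k ≤ 1 :=
      Finset.prod_le_one (fun i _ => (hvpos i).le) (fun i _ => hv1 i)
    have hIco0 : 0 < ∏ k ∈ Ico M N, v k := Finset.prod_pos (fun i _ => hvpos i)
    have hPM : 0 < ∏ k ∈ range M, v k := Finset.prod_pos (fun i _ => hvpos i)
    calc (∏ k ∈ range N, v k) * (1/2) ≤ (∏ k ∈ range N, v k) * 1 := by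
          apply mul_le_mul_of_nonneg_left (by norm_num) hPNpos.le
      _ = (∏ k ∈ range M, v k) * ∏ k ∈ Ico M N, v k := by rw [mul_one, hsplit]
      _ ≤ (∏ k ∈ range M, v k) * 1 := mul_le_mul_of_nonneg_left hIco1 hPM.le
      _ = ∏ k ∈ range M, v k := mul_one _
  · -- N ≤ M
    have hsplit : (∏ k ∈ range N, v k) * ∏ k ∈ Ico N M, v k = ∏ k ∈ range M, v k :=
      prod_range_mul_prod_Ico v hMN.le
    have hsum : ∑ k ∈ Ico N M, ‖q‖ ^ (k+1) ≤ 1 / 2 := by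
      calc ∑ k ∈ Ico N M, ‖q‖ ^ (k+1) = ∑ i ∈ range (M - N), ‖q‖ ^ (N + i + 1) := by
            rw [Finset.sum_Ico_eq_sum_range]
        _ = ‖q‖ ^ N * ∑ i ∈ range (M - N), ‖q‖ ^ (i+1) := by
            rw [mul_sum]
            apply Finset.sum_congr rfl
            intro i _
            rw [← pow_add, add_assoc]
        _ ≤ ‖q‖ ^ N * ∑ i ∈ range (M - N), ‖q‖ ^ i := by
            apply mul_le_mul_of_nonneg_left ?_ (by positivity)
            apply Finset.sum_le_sum
            intro i _
            exact pow_le_pow_of_le_one hq0 hq.le (by omega)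
        _ ≤ ‖q‖ ^ N * (1 - ‖q‖)⁻¹ :=
            mul_le_mul_of_nonneg_left (geom_sum_le_inv hq0 hq _) (by positivity)
        _ ≤ 1 / 2 := hN
    have hIco : 1 / 2 ≤ ∏ k ∈ Ico N M, v k := by
      have := weierstrass_ineq (fun k => ‖q‖ ^ (k+1)) (fun k => by positivity)
        (fun k => by have := hvpos k; simp only [hv] at this; linarith) (Ico N M)
      calc (1:ℝ)/2 ≤ 1 - ∑ k ∈ Ico N M, ‖q‖ ^ (k+1) := by linarith
        _ ≤ ∏ k ∈ Ico N M, (1 - ‖q‖ ^ (k+1)) := this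
        _ = ∏ k ∈ Ico N M, v k := rfl
    calc (∏ k ∈ range N, v k) * (1/2) ≤ (∏ k ∈ range N, v k) * ∏ k ∈ Ico N M, v k :=
          mul_le_mul_of_nonneg_left hIco hPNpos.le
      _ = ∏ k ∈ range M, v k := hsplit

lemma qPochN_q_ne_zero (q : ℂ) (hq : ‖q‖ < 1) (M : ℕ) : qPochN q q M ≠ 0 := by
  obtain ⟨δ, hδ, h⟩ := qPochN_q_norm_lower q hq
  intro h0
  have := h M
  rw [h0] at this
  simp at this
  linarith


/-- coefficients of the `₁φ₀` series -/
noncomputable def qbC (a q : ℂ) (M : ℕ) : ℂ := qPochN a q M / qPochN q q M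

/-- the `₁φ₀(a;—;q,x)` series -/
noncomputable def qbF (a q x : ℂ) : ℂ := ∑' M : ℕ, qbC a q M * x ^ M

lemma qPochN_succ (b q : ℂ) (N : ℕ) :
    qPochN b q (N + 1) = qPochN b q N * (1 - b * q ^ N) := by
  rw [qPochN, qPochN, prod_range_succ]

lemma qbC_zero (a q : ℂ) : qbC a q 0 = 1 := by simp [qbC, qPochN]

lemma qbC_bound (a q : ℂ) (hq : ‖q‖ < 1) : ∃ K : ℝ, 0 ≤ K ∧ ∀ M, ‖qbC a q M‖ ≤ K := by
  obtain ⟨δ, hδ, hlow⟩ := qPochN_q_norm_lower q hq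
  refine ⟨Real.exp (‖a‖ * (1 - ‖q‖)⁻¹) / δ, by positivity, fun M => ?_⟩
  rw [qbC, norm_div]
  exact div_le_div₀ (by positivity) (qPochN_norm_le a q hq M) hδ (hlow M)

lemma summable_qbC (a q x : ℂ) (hq : ‖q‖ < 1) (hx : ‖x‖ < 1) :
    Summable (fun M : ℕ => qbC a q M * x ^ M) := by
  obtain ⟨K, hK0, hK⟩ := qbC_bound a q hq
  apply Summable.of_norm_bounded (g := fun M => K * ‖x‖ ^ M)
    ((summable_geometric_of_lt_one (norm_nonneg x) hx).mul_left K)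
  intro M
  rw [norm_mul, norm_pow]
  exact mul_le_mul_of_nonneg_right (hK M) (by positivity)

lemma qbC_rec (a q : ℂ) (hq : ‖q‖ < 1) (M : ℕ) :
    qbC a q (M + 1) * (1 - q ^ (M + 1)) = qbC a q M * (1 - a * q ^ M) := by
  have h1 : qPochN q q (M + 1) ≠ 0 := qPochN_q_ne_zero q hq (M + 1)
  have h2 : qPochN q q M ≠ 0 := qPochN_q_ne_zero q hq M
  rw [qbC, qbC, qPochN_succ, qPochN_succ]
  have hp : (1:ℂ) - q * q ^ M = 1 - q ^ (M+1) := by rw [pow_succ]; ring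
  rw [qPochN_succ, hp] at h1
  have h3 : (1:ℂ) - q ^ (M+1) ≠ 0 := by
    intro h0
    apply h1
    rw [h0, mul_zero]
  rw [hp]
  field_simp

lemma qbF_funcEq (a q x : ℂ) (hq : ‖q‖ < 1) (hx : ‖x‖ < 1) :
    (1 - x) * qbF a q x = (1 - a * x) * qbF a q (q * x) := by
  have hqx : ‖q * x‖ < 1 := by
    rw [norm_mul]
    calc ‖q‖ * ‖x‖ ≤ 1 * ‖x‖ := mul_le_mul_of_nonneg_right hq.le (norm_nonneg x)
      _ = ‖x‖ := one_mul _
      _ < 1 := hx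
  have h1 : Summable (fun M : ℕ => qbC a q M * x ^ M) := summable_qbC a q x hq hx
  have h2 : Summable (fun M : ℕ => qbC a q M * (q * x) ^ M) := summable_qbC a q (q*x) hq hqx
  -- u and w
  set u : ℕ → ℂ := fun M => qbC a q M * (1 - q ^ M) * x ^ M with hu
  set w : ℕ → ℂ := fun M => qbC a q M * (1 - a * q ^ M) * x ^ (M + 1) with hw
  have hus : Summable u := by
    apply (h1.sub h2).congr
    intro M
    simp only [hu, mul_pow]
    ring
  have hws : Summable w := by
    apply ((h1.mul_left x).sub ((h2.mul_left (a * x)))).congr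
    intro M
    simp only [hw, mul_pow, pow_succ]
    ring
  have hu0 : u 0 = 0 := by simp [hu]
  have hrec : ∀ M, u (M + 1) = w M := by
    intro M
    simp only [hu, hw]
    rw [qbC_rec a q hq M]
  have huw : ∑' M, u M = ∑' M, w M := by
    rw [Summable.tsum_eq_zero_add hus, hu0, zero_add]
    exact tsum_congr hrec
  have key : ∑' M, (u M - w M) = 0 := by
    rw [Summable.tsum_sub hus hws, huw, sub_self]
  -- now convert the goal
  have e1 : (1 - x) * qbF a q x = ∑' M, (1 - x) * (qbC a q M * x ^ M) := tsum_mul_left.symm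
  have e2 : (1 - a * x) * qbF a q (q * x) =
      ∑' M, (1 - a * x) * (qbC a q M * (q * x) ^ M) := tsum_mul_left.symm
  rw [e1, e2, ← sub_eq_zero, ← Summable.tsum_sub (h1.mul_left _) (h2.mul_left _), ← key]
  apply tsum_congr
  intro M
  simp only [hu, hw, mul_pow, pow_succ]
  ring

lemma qb_iter (a q x : ℂ) (hq : ‖q‖ < 1) (hx : ‖x‖ < 1) (N : ℕ) :
    qPochN (a * x) q N * qbF a q (q ^ N * x) = qPochN x q N * qbF a q x := by
  induction N with
  | zero => simp [qPochN]
  | succ N ih =>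
    have hy : ‖q ^ N * x‖ < 1 := by
      rw [norm_mul, norm_pow]
      calc ‖q‖ ^ N * ‖x‖ ≤ 1 * ‖x‖ :=
            mul_le_mul_of_nonneg_right (pow_le_one₀ (norm_nonneg q) hq.le) (norm_nonneg x)
        _ = ‖x‖ := one_mul _
        _ < 1 := hx
    have hfe := qbF_funcEq a q (q ^ N * x) hq hy
    have hqx' : q ^ (N + 1) * x = q * (q ^ N * x) := by rw [pow_succ]; ring
    rw [qPochN_succ, qPochN_succ]
    calc qPochN (a * x) q N * (1 - a * x * q ^ N) * qbF a q (q ^ (N+1) * x)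
        = qPochN (a * x) q N * ((1 - a * (q ^ N * x)) * qbF a q (q * (q ^ N * x))) := by
          rw [hqx']; ring
      _ = qPochN (a * x) q N * ((1 - q ^ N * x) * qbF a q (q ^ N * x)) := by rw [← hfe]
      _ = (1 - q ^ N * x) * (qPochN (a * x) q N * qbF a q (q ^ N * x)) := by ring
      _ = (1 - q ^ N * x) * (qPochN x q N * qbF a q x) := by rw [ih]
      _ = qPochN x q N * (1 - x * q ^ N) * qbF a q x := by ring

lemma qbF_sub_one_bound (a q y : ℂ) (hq : ‖q‖ < 1) (hy : ‖y‖ < 1)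
    (K : ℝ) (hK : ∀ M, ‖qbC a q M‖ ≤ K) :
    ‖qbF a q y - 1‖ ≤ K * (1 - ‖y‖)⁻¹ * ‖y‖ := by
  have hsum := summable_qbC a q y hq hy
  have h2 : qbF a q y - 1 = ∑' M : ℕ, qbC a q (M + 1) * y ^ (M + 1) := by
    rw [qbF, Summable.tsum_eq_zero_add hsum, qbC_zero]
    simp
  rw [h2]
  have hgeom : HasSum (fun M : ℕ => K * ‖y‖ * ‖y‖ ^ M) (K * ‖y‖ * (1 - ‖y‖)⁻¹) := by
    have := (hasSum_geometric_of_lt_one (norm_nonneg y) hy).mul_left (K * ‖y‖)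
    exact this
  have hb : ∀ M : ℕ, ‖qbC a q (M + 1) * y ^ (M + 1)‖ ≤ K * ‖y‖ * ‖y‖ ^ M := by
    intro M
    rw [norm_mul, norm_pow, pow_succ]
    calc ‖qbC a q (M+1)‖ * (‖y‖ ^ M * ‖y‖) ≤ K * (‖y‖ ^ M * ‖y‖) :=
          mul_le_mul_of_nonneg_right (hK _) (by positivity)
      _ = K * ‖y‖ * ‖y‖ ^ M := by ring
  calc ‖∑' M : ℕ, qbC a q (M + 1) * y ^ (M + 1)‖ ≤ K * ‖y‖ * (1 - ‖y‖)⁻¹ :=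
        tsum_of_norm_bounded hgeom hb
    _ = K * (1 - ‖y‖)⁻¹ * ‖y‖ := by ring

/-- The q-binomial theorem, product form. -/
lemma qBinomial (a q x : ℂ) (hq : ‖q‖ < 1) (hx : ‖x‖ < 1) :
    qPochInf x q * qbF a q x = qPochInf (a * x) q := by
  obtain ⟨K, hK0, hK⟩ := qbC_bound a q hq
  have h1x : (0:ℝ) < 1 - ‖x‖ := by linarith
  have h1 : Tendsto (fun N => qPochN x q N * qbF a q x) atTop
      (𝓝 (qPochInf x q * qbF a q x)) := (tendsto_qPochN x q hq).mul_const _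
  have hdiff : Tendsto (fun N : ℕ => qbF a q (q ^ N * x) - 1) atTop (𝓝 0) := by
    apply squeeze_zero_norm (a := fun N : ℕ => (K * (1 - ‖x‖)⁻¹ * ‖x‖) * ‖q‖ ^ N)
    · intro N
      have hyle : ‖q ^ N * x‖ = ‖q‖ ^ N * ‖x‖ := by rw [norm_mul, norm_pow]
      have hxle : ‖q ^ N * x‖ ≤ ‖x‖ := by
        rw [hyle]
        calc ‖q‖ ^ N * ‖x‖ ≤ 1 * ‖x‖ :=
              mul_le_mul_of_nonneg_right (pow_le_one₀ (norm_nonneg q) hq.le) (norm_nonneg x)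
          _ = ‖x‖ := one_mul _
      have hy : ‖q ^ N * x‖ < 1 := lt_of_le_of_lt hxle hx
      have hinv : (1 - ‖q ^ N * x‖)⁻¹ ≤ (1 - ‖x‖)⁻¹ := by
        apply inv_anti₀ h1x
        linarith
      calc ‖qbF a q (q ^ N * x) - 1‖ ≤ K * (1 - ‖q ^ N * x‖)⁻¹ * ‖q ^ N * x‖ :=
            qbF_sub_one_bound a q _ hq hy K hK
        _ ≤ K * (1 - ‖x‖)⁻¹ * ‖q ^ N * x‖ := by
            apply mul_le_mul_of_nonneg_right ?_ (norm_nonneg _)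
            exact mul_le_mul_of_nonneg_left hinv hK0
        _ = (K * (1 - ‖x‖)⁻¹ * ‖x‖) * ‖q‖ ^ N := by rw [hyle]; ring
    · have := (tendsto_pow_atTop_nhds_zero_of_lt_one (norm_nonneg q) hq).const_mul
        (K * (1 - ‖x‖)⁻¹ * ‖x‖)
      simpa using this
  have h2 : Tendsto (fun N : ℕ => qbF a q (q ^ N * x)) atTop (𝓝 1) := by
    have := hdiff.add_const 1
    simpa using this
  have h3 : Tendsto (fun N => qPochN (a * x) q N * qbF a q (q ^ N * x)) atTop
      (𝓝 (qPochInf (a * x) q * 1)) := (tendsto_qPochN (a * x) q hq).mul h2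
  rw [mul_one] at h3
  have heq : (fun N => qPochN (a * x) q N * qbF a q (q ^ N * x)) =
      fun N => qPochN x q N * qbF a q x := funext (qb_iter a q x hq hx)
  rw [heq] at h3
  exact tendsto_nhds_unique h1 h3

lemma div_div_of_ne' (x A B : ℂ) (hA : A ≠ 0) : x / (A / B) = x * B / A := by
  rcases eq_or_ne B 0 with h | h
  · simp [h]
  · field_simp

lemma qPochN_add' (b q : ℂ) (s M : ℕ) :
    qPochN b q (s + M) = qPochN b q s * qPochN (b * q ^ s) q M := by
  rw [qPochN, qPochN, qPochN, prod_range_add]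
  congr 1
  apply Finset.prod_congr rfl
  intro i _
  rw [pow_add]; ring

lemma qPochN_comm' (b q : ℂ) (s M : ℕ) :
    qPochN (b * q ^ s) q M * qPochN b q s = qPochN b q M * qPochN (b * q ^ M) q s := by
  have h1 := qPochN_add' b q s M
  have h2 := qPochN_add' b q M s
  rw [Nat.add_comm s M] at h1
  rw [h2] at h1
  linear_combination -h1

end Aux

open Filter Topology Finset in
theorem stmt4 (m : ℕ) (lam : Fin (m + 2) → ℕ) (hlam : Antitone lam)
    (q t : ℂ) (hq0 : 0 < ‖q‖) (hq1 : ‖q‖ < 1) (ht : t ≠ 0)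
    (hb : ∀ j : Fin (m + 1), ∀ k : ℕ, bPar m lam q t j * q ^ k ≠ 1)
    (rho : ℕ → ℂ)
    (hrho : ∀ w : ℂ,
      (∏ i : Fin (m + 1), ∏ j ∈ Finset.range (lam i.castSucc - lam i.succ),
        (1 - bPar m lam q t i * q ^ j * w) / (1 - bPar m lam q t i * q ^ j)) =
      ∑ k ∈ Finset.range (lam 0 - lam (Fin.last (m + 1)) + 1), rho k * w ^ k) :
    ∀ z : ℂ, ‖z‖ < 1 →
      qPochInf (q * z * t ^ (-(m + 2 : ℤ))) q ≠ 0 →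
      psiLam m lam q t z =
        z ^ (lam (Fin.last (m + 1))) *
          ∑ k ∈ Finset.range (lam 0 - lam (Fin.last (m + 1)) + 1),
            rho k * qPochN z q k /
              qPochZ (q * z * t ^ (-(m + 2 : ℤ))) q
                ((lam (Fin.last (m + 1)) : ℤ) - (lam 0 : ℤ) + k) := by
  intro z hz hcinf
  have hnq : ‖q‖ < 1 := by exact hq1
  have hnz : ‖z‖ < 1 := by exact hz
  have hqne : q ≠ 0 := by
    intro h; rw [h] at hq0; simp at hq0
  have hqkz : ∀ k : ℕ, ‖q ^ k * z‖ < 1 := by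
    intro k
    rw [norm_mul, norm_pow]
    calc ‖q‖ ^ k * ‖z‖ ≤ 1 * ‖z‖ :=
          mul_le_mul_of_nonneg_right (pow_le_one₀ (norm_nonneg q) hnq.le) (norm_nonneg z)
      _ = ‖z‖ := one_mul _
      _ < 1 := hnz
  have hbne : ∀ (j : Fin (m + 1)) (s : ℕ), qPochN (bPar m lam q t j) q s ≠ 0 := by
    intro j s
    rw [qPochN]
    apply Finset.prod_ne_zero_iff.2
    intro k _
    intro h0
    rw [sub_eq_zero] at h0
    exact hb j k h0.symm
  -- a_{j+1} = b_j q^{μ_j}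
  have hab : ∀ j : Fin (m + 1),
      aPar m lam q t j.succ = bPar m lam q t j * q ^ (lam j.castSucc - lam j.succ) := by
    intro j
    have hle : lam j.succ ≤ lam j.castSucc := hlam (Fin.castSucc_le_succ j)
    have hv1 : ((j.succ : Fin (m + 2)) : ℤ) = (j : ℤ) + 1 := by
      simp [Fin.val_succ]
    have hv2 : ((j.castSucc : Fin (m + 2)) : ℤ) = (j : ℤ) := by
      simp
    have hμ : (q : ℂ) ^ (lam j.castSucc - lam j.succ) =
        q ^ ((lam j.castSucc : ℤ) - (lam j.succ : ℤ)) := by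
      rw [← zpow_natCast q (lam j.castSucc - lam j.succ), Nat.cast_sub hle]
    rw [bPar, aPar, aPar, hμ, hv1, hv2]
    rw [show 1 + (lam (Fin.last (m + 1)) : ℤ) - (lam j.succ : ℤ) =
        (1 + (lam (Fin.last (m + 1)) : ℤ) - (lam j.castSucc : ℤ)) +
        ((lam j.castSucc : ℤ) - (lam j.succ : ℤ)) from by ring]
    rw [show (j : ℤ) + 1 - (m + 2 : ℤ) = (1 : ℤ) + ((j : ℤ) - (m + 2 : ℤ)) from by ring]
    rw [zpow_add₀ hqne, zpow_add₀ ht, zpow_one]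
    ring
  -- a₀ (q^k z) = c q^{λ_n - λ_1 + k}
  have ha0c : ∀ k : ℕ, aPar m lam q t 0 * (q ^ k * z) =
      q * z * t ^ (-(m + 2 : ℤ)) *
        q ^ ((lam (Fin.last (m + 1)) : ℤ) - (lam 0 : ℤ) + (k : ℤ)) := by
    intro k
    have hv0 : (((0 : Fin (m + 2))) : ℤ) = 0 := by simp
    have hk : (q : ℂ) ^ k = q ^ ((k : ℕ) : ℤ) := (zpow_natCast q k).symm
    rw [aPar, hv0, hk]
    rw [show (0 : ℤ) - (m + 2 : ℤ) = -(m + 2 : ℤ) from by ring]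
    rw [show 1 + (lam (Fin.last (m + 1)) : ℤ) - (lam 0 : ℤ) =
        (1 : ℤ) + ((lam (Fin.last (m + 1)) : ℤ) - (lam 0 : ℤ)) from by ring]
    rw [show ((lam (Fin.last (m + 1)) : ℤ) - (lam 0 : ℤ) + (k : ℤ)) =
        ((lam (Fin.last (m + 1)) : ℤ) - (lam 0 : ℤ)) + (k : ℤ) from by ring]
    rw [zpow_add₀ hqne, zpow_add₀ hqne, zpow_one]
    ring
  -- ρ-identity in Pochhammer form
  have hμprod : ∀ M : ℕ,
      (∏ j : Fin (m + 1), qPochN (bPar m lam q t j * q ^ M) q (lam j.castSucc - lam j.succ))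
      = (∑ k ∈ range (lam 0 - lam (Fin.last (m + 1)) + 1), rho k * (q ^ M) ^ k) *
        ∏ j : Fin (m + 1), qPochN (bPar m lam q t j) q (lam j.castSucc - lam j.succ) := by
    intro M
    have h := hrho (q ^ M)
    have hL : (∏ i : Fin (m + 1), ∏ j ∈ Finset.range (lam i.castSucc - lam i.succ),
        (1 - bPar m lam q t i * q ^ j * q ^ M) / (1 - bPar m lam q t i * q ^ j))
        = (∏ j : Fin (m + 1),
            qPochN (bPar m lam q t j * q ^ M) q (lam j.castSucc - lam j.succ)) /
          (∏ j : Fin (m + 1), qPochN (bPar m lam q t j) q (lam j.castSucc - lam j.succ)) := by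
      rw [← prod_div_distrib]
      apply Finset.prod_congr rfl
      intro j _
      rw [qPochN, qPochN, ← prod_div_distrib]
      apply Finset.prod_congr rfl
      intro i _
      rw [show bPar m lam q t j * q ^ i * q ^ M = bPar m lam q t j * q ^ M * q ^ i from by ring]
    rw [hL] at h
    rw [div_eq_iff (Finset.prod_ne_zero_iff.2 (fun j _ => hbne j _))] at h
    exact h
  -- the per-M coefficient identity
  have hkey : ∀ M : ℕ,
      (∏ i, qPochN (aPar m lam q t i) q M) /
        (qPochN q q M * ∏ j, qPochN (bPar m lam q t j) q M) * z ^ M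
      = ∑ k ∈ range (lam 0 - lam (Fin.last (m + 1)) + 1),
          rho k * (qbC (aPar m lam q t 0) q M * (q ^ k * z) ^ M) := by
    intro M
    have hsplit : (∏ i : Fin (m + 2), qPochN (aPar m lam q t i) q M)
        = qPochN (aPar m lam q t 0) q M *
          ∏ j : Fin (m + 1), qPochN (aPar m lam q t j.succ) q M :=
      Fin.prod_univ_succ _
    have hstep : ∀ j : Fin (m + 1), qPochN (aPar m lam q t j.succ) q M *
        qPochN (bPar m lam q t j) q (lam j.castSucc - lam j.succ)
        = qPochN (bPar m lam q t j) q M *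
          qPochN (bPar m lam q t j * q ^ M) q (lam j.castSucc - lam j.succ) := by
      intro j
      rw [hab j]
      exact qPochN_comm' _ _ _ _
    have hprod : (∏ j : Fin (m + 1), qPochN (aPar m lam q t j.succ) q M) *
        (∏ j : Fin (m + 1), qPochN (bPar m lam q t j) q (lam j.castSucc - lam j.succ))
        = (∏ j : Fin (m + 1), qPochN (bPar m lam q t j) q M) *
          (∏ j : Fin (m + 1),
            qPochN (bPar m lam q t j * q ^ M) q (lam j.castSucc - lam j.succ)) := by
      rw [← prod_mul_distrib, ← prod_mul_distrib]
      exact Finset.prod_congr rfl (fun j _ => hstep j)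
    rw [hμprod M] at hprod
    have hDne : (∏ j : Fin (m + 1),
        qPochN (bPar m lam q t j) q (lam j.castSucc - lam j.succ)) ≠ 0 :=
      Finset.prod_ne_zero_iff.2 (fun j _ => hbne j _)
    have hcancel : (∏ j : Fin (m + 1), qPochN (aPar m lam q t j.succ) q M)
        = (∏ j : Fin (m + 1), qPochN (bPar m lam q t j) q M) *
          (∑ k ∈ range (lam 0 - lam (Fin.last (m + 1)) + 1), rho k * (q ^ M) ^ k) :=
      mul_right_cancel₀ hDne (by rw [hprod]; ring)
    rw [hsplit, hcancel]
    have hBne : (∏ j : Fin (m + 1), qPochN (bPar m lam q t j) q M) ≠ 0 :=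
      Finset.prod_ne_zero_iff.2 (fun j _ => hbne j _)
    have hQQ := qPochN_q_ne_zero q hnq M
    have hzz : ∀ k : ℕ, (q ^ M) ^ k * z ^ M = (q ^ k * z) ^ M := by
      intro k
      rw [mul_pow, ← pow_mul, ← pow_mul, Nat.mul_comm]
    calc qPochN (aPar m lam q t 0) q M *
          ((∏ j : Fin (m + 1), qPochN (bPar m lam q t j) q M) *
            (∑ k ∈ range (lam 0 - lam (Fin.last (m + 1)) + 1), rho k * (q ^ M) ^ k)) /
          (qPochN q q M * ∏ j : Fin (m + 1), qPochN (bPar m lam q t j) q M) * z ^ M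
        = (∑ k ∈ range (lam 0 - lam (Fin.last (m + 1)) + 1), rho k * (q ^ M) ^ k) *
            (qPochN (aPar m lam q t 0) q M / qPochN q q M * z ^ M) := by
          field_simp
      _ = ∑ k ∈ range (lam 0 - lam (Fin.last (m + 1)) + 1),
            rho k * (qbC (aPar m lam q t 0) q M * (q ^ k * z) ^ M) := by
          rw [Finset.sum_mul]
          apply Finset.sum_congr rfl
          intro k _
          rw [← hzz k, qbC]
          ring
  -- evaluate the basic hypergeometric series
  have hbhs : bhs (aPar m lam q t) (bPar m lam q t) q z
      = ∑ k ∈ range (lam 0 - lam (Fin.last (m + 1)) + 1),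
          rho k * qbF (aPar m lam q t 0) q (q ^ k * z) := by
    rw [bhs, tsum_congr hkey]
    rw [Summable.tsum_finsetSum (fun k _ => (summable_qbC (aPar m lam q t 0) q (q ^ k * z) hnq
      (hqkz k)).mul_left (rho k))]
    apply Finset.sum_congr rfl
    intro k _
    rw [qbF, ← tsum_mul_left]
  -- final assembly
  rw [psiLam, phiLam, hbhs, mul_left_comm]
  congr 1
  rw [Finset.mul_sum]
  apply Finset.sum_congr rfl
  intro k _
  rw [qPochZ, div_div_of_ne' _ _ _ hcinf, ← ha0c k,
    ← qBinomial (aPar m lam q t 0) q (q ^ k * z) hnq (hqkz k),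
    qPochInf_split z q hnq k, show z * q ^ k = q ^ k * z from mul_comm z _]
  ring
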